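/- arXiv:2106.14312 — 6 statements merged into one kernel-verified Lean document; each statement's English description precedes it below -/
import Mathlib

section
/- Let b be a natural number and let v : Fin (3b+1) → ℝ be a family of real values, and let H ⊆ Fin (3b+1) be a subset of indices with |H| ≥ 2b+1 (the 'honest' indices). Form the trimmed mean of v: sort the 3b+1 values in nondecreasing order, discard the smallest b values and the largest b values, and take the arithmetic mean of the remaining b+1 values. Then the trimmed mean lies in the closed interval [min_{i ∈ H} v i, max_{i ∈ H} v i]. -/
/-!
Every value kept by the trimming is a `k`-th order statistic with `b ≤ k ≤ 2b`. The `k + 1`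
positions at or below `k` and the `≥ 2b + 1` honest indices cannot be disjoint among `3b + 1`
indices, so some honest value lies below the kept value; symmetrically, the `3b + 1 - k` positions
at or above `k` meet the honest ones, so some honest value lies above it. A mean of values in
`[min_H v, max_H v]` stays in that interval.
-/

/-- The trimmed mean of `3b+1` real values with trimming parameter `b`:
sort the values in nondecreasing order, discard the smallest `b` and the
largest `b` values, and take the arithmetic mean of the remaining `b+1`
values. -/
noncomputable def trimmedMean (b : ℕ) (v : Fin (3 * b + 1) → ℝ) : ℝ :=
  (∑ k ∈ Finset.univ.filter (fun k : Fin (3 * b + 1) => b ≤ k.val ∧ k.val ≤ 2 * b),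
      (v ∘ Tuple.sort v) k) / (b + 1)

open Finset
open scoped BigOperators

section TupleSort

variable {n : ℕ} {α : Type*} [LinearOrder α] (v : Fin n → α) (H : Finset (Fin n))

theorem exists_mem_sort_apply_mem (S : Finset (Fin n)) (h : n < #S + #H) :
    ∃ j ∈ S, Tuple.sort v j ∈ H := by
  obtain ⟨j, hj⟩ := inter_nonempty_of_card_lt_card_add_card (subset_univ S)
    (subset_univ (H.map (Tuple.sort v).symm.toEmbedding)) (by simpa using h)
  simp only [mem_inter, mem_map_equiv, Equiv.symm_symm] at hj
  exact ⟨j, hj⟩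

theorem exists_mem_le_sort_apply {k : Fin n} (h : n ≤ k + #H) :
    ∃ i ∈ H, v i ≤ v (Tuple.sort v k) := by
  obtain ⟨j, hjk, hjH⟩ := exists_mem_sort_apply_mem v H (Iic k) (by rw [Fin.card_Iic]; omega)
  exact ⟨_, hjH, Tuple.monotone_sort v (mem_Iic.mp hjk)⟩

theorem exists_mem_sort_apply_le {k : Fin n} (h : k < #H) :
    ∃ i ∈ H, v (Tuple.sort v k) ≤ v i := by
  obtain ⟨j, hkj, hjH⟩ := exists_mem_sort_apply_mem v H (Ici k) (by rw [Fin.card_Ici]; omega)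
  exact ⟨_, hjH, Tuple.monotone_sort v (mem_Ici.mp hkj)⟩

end TupleSort

def trimmedWindow (b : ℕ) : Finset (Fin (3 * b + 1)) :=
  univ.filter fun k => b ≤ k.val ∧ k.val ≤ 2 * b

theorem mem_trimmedWindow {b : ℕ} {k : Fin (3 * b + 1)} :
    k ∈ trimmedWindow b ↔ b ≤ k.val ∧ k.val ≤ 2 * b := by
  simp [trimmedWindow]

theorem card_trimmedWindow (b : ℕ) : #(trimmedWindow b) = b + 1 := by
  have : trimmedWindow b = Icc ⟨b, by omega⟩ ⟨2 * b, by omega⟩ := by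
    ext k
    simp [mem_trimmedWindow, Fin.le_def]
  rw [this, Fin.card_Icc]
  simp only
  omega

theorem trimmedMean_eq_expect (b : ℕ) (v : Fin (3 * b + 1) → ℝ) :
    trimmedMean b v = 𝔼 k ∈ trimmedWindow b, v (Tuple.sort v k) := by
  rw [expect_eq_sum_div_card, card_trimmedWindow]
  push_cast
  rfl

theorem trimmedMean_mem_Icc_honest (b : ℕ) (v : Fin (3 * b + 1) → ℝ)
    (H : Finset (Fin (3 * b + 1))) (hH : 2 * b + 1 ≤ H.card) :
    trimmedMean b v ∈
      Set.Icc (H.inf' (Finset.card_pos.mp (by omega)) v)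
        (H.sup' (Finset.card_pos.mp (by omega)) v) := by
  have hwindow : (trimmedWindow b).Nonempty := by
    rw [← card_pos, card_trimmedWindow]
    omega
  rw [trimmedMean_eq_expect]
  constructor
  · refine le_expect hwindow fun k hk => ?_
    obtain ⟨i, hi, hle⟩ := exists_mem_le_sort_apply v H (k := k)
      (by rw [mem_trimmedWindow] at hk; omega)
    exact inf'_le_of_le _ hi hle
  · refine expect_le hwindow fun k hk => ?_
    obtain ⟨i, hi, hle⟩ := exists_mem_sort_apply_le v H (k := k)
      (by rw [mem_trimmedWindow] at hk; omega)
    exact le_sup'_of_le _ hi hle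
end

section
/- Let n be a natural number and let G be a directed graph without self-loops on a vertex set of size 2n+1 in which every vertex has in-degree at least n (i.e., G is obtained from the complete directed graph on 2n+1 vertices by removing at most n incoming edges from each vertex). Then G contains a source component: there exists a vertex v₀ such that for every other vertex w there is a directed path in G from v₀ to w. -/
/-!
Choose `v₀` whose set `R` of reachable vertices is as large as possible. Every in-neighbour of
`v₀` lies in `R`, for otherwise it would reach `R` and itself, a larger set; and the complement
of `R` contains every in-neighbour of each of its vertices. A set containing a vertex together
with its at least `n` in-neighbours has more than `n` elements, so if `R` and its complement were
both nonempty they would together have more than `2n + 1` elements.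
-/

open Finset Relation

section

variable {V : Type*} [Fintype V] (A : V → V → Prop)

theorem card_lt_of_inNeighbors_subset [DecidableRel A] (hirr : ∀ v, ¬ A v v) {n : ℕ} {v : V}
    (hv : n ≤ #{u | A u v}) {S : Finset V} (hvS : v ∈ S) (hS : ∀ u, A u v → u ∈ S) :
    n < #S :=
  hv.trans_lt <| card_lt_card <| (ssubset_iff_of_subset fun u hu => hS u (mem_filter.1 hu).2).2
    ⟨v, hvS, fun hvv => hirr v (mem_filter.1 hvv).2⟩

open Classical in
noncomputable def reachFinset (v : V) : Finset V := {w | ReflTransGen A v w}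

variable {A}

theorem mem_reachFinset {v w : V} : w ∈ reachFinset A v ↔ ReflTransGen A v w := by
  simp [reachFinset]

theorem reflTransGen_of_card_reachFinset_maximal {u v : V}
    (hmax : ∀ x, #(reachFinset A x) ≤ #(reachFinset A v)) (hu : A u v) : ReflTransGen A v u := by
  by_contra hvu
  have hsub : reachFinset A v ⊂ reachFinset A u :=
    (ssubset_iff_of_subset fun w hw => mem_reachFinset.2 (.head hu (mem_reachFinset.1 hw))).2
      ⟨u, mem_reachFinset.2 .refl, mt mem_reachFinset.1 hvu⟩
  exact (hmax u).not_gt (card_lt_card hsub)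

end

/-- Source component lemma: a loopless directed graph on `2n+1` vertices in which
every vertex has in-degree at least `n` has a vertex with a directed path to
every other vertex. -/
theorem reduced_graph_has_source_component (n : ℕ)
    (A : Fin (2 * n + 1) → Fin (2 * n + 1) → Prop) [DecidableRel A]
    (hirr : ∀ v, ¬ A v v)
    (hindeg : ∀ v : Fin (2 * n + 1), n ≤ (Finset.univ.filter (fun u => A u v)).card) :
    ∃ v₀ : Fin (2 * n + 1), ∀ w : Fin (2 * n + 1), w ≠ v₀ →
      Relation.ReflTransGen A v₀ w := by
  obtain ⟨v₀, hmax⟩ := Finite.exists_max fun v => #(reachFinset A v)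
  refine ⟨v₀, fun w _ => ?_⟩
  by_contra hw
  have hreach : n < #(reachFinset A v₀) :=
    card_lt_of_inNeighbors_subset A hirr (hindeg v₀) (mem_reachFinset.2 .refl)
      fun u hu => mem_reachFinset.2 (reflTransGen_of_card_reachFinset_maximal hmax hu)
  have hunreach : n < #(reachFinset A v₀)ᶜ :=
    card_lt_of_inNeighbors_subset A hirr (hindeg w) (by simpa [mem_reachFinset] using hw)
      fun u hu => by simpa [mem_reachFinset] using fun hu' => hw (hu'.tail hu)
  have hsum := card_add_card_compl (reachFinset A v₀)
  rw [Fintype.card_fin] at hsum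
  omega
end

section
/- Let n and N be natural numbers with N ≥ 2n+1, and let G be a directed graph without self-loops on a vertex set of size N in which every vertex has in-degree at least N − 1 − n (i.e., G is obtained from the complete directed graph on N vertices by removing at most n incoming edges from each vertex). Then there exists a vertex v₀ such that for every other vertex w there is a directed path in G from v₀ to w. -/
/-!
Take a vertex `a` whose set `R` of reachable vertices is as large as possible, and suppose some
`w` lies outside `R`. Every in-neighbour of `w` lies outside `R` and differs from `w`, so `w` has
fewer than `N - #R` in-neighbours. Every in-neighbour `u` of `a` lies in `R`: otherwise `u` would
reach all of `R` and itself, beating `a`. So `a` has fewer than `#R` in-neighbours. Adding up, the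
two in-degrees total at most `N - 2`, which is too few when each is at least `N - 1 - n` and
`2n + 1 ≤ N`.
-/

open Finset Relation

variable {α : Type*} [Fintype α] (r : α → α → Prop)

noncomputable def reachableSet (a : α) : Finset α := by
  classical exact {b | ReflTransGen r a b}

variable {r}

@[simp]
theorem mem_reachableSet {a b : α} : b ∈ reachableSet r a ↔ ReflTransGen r a b := by
  classical simp [reachableSet]

theorem reachableSet_ssubset_of_notMem {a u : α} (hua : r u a) (hu : u ∉ reachableSet r a) :
    reachableSet r a ⊂ reachableSet r u :=
  ssubset_iff_of_subset (fun _ hb ↦ mem_reachableSet.2 ((mem_reachableSet.1 hb).head hua))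
    |>.2 ⟨u, mem_reachableSet.2 .refl, hu⟩

variable [DecidableRel r]

theorem filter_rel_subset_compl_erase [DecidableEq α] {a w : α} (hr : ∀ x, ¬ r x x)
    (hw : w ∉ reachableSet r a) : ({u | r u w} : Finset α) ⊆ (reachableSet r a)ᶜ.erase w := by
  intro u hu
  have huw : r u w := (mem_filter.1 hu).2
  refine mem_erase.2 ⟨fun h ↦ hr u (h ▸ huw), mem_compl.2 fun hu ↦ hw ?_⟩
  exact mem_reachableSet.2 ((mem_reachableSet.1 hu).tail huw)

theorem filter_rel_subset_erase_of_card_le [DecidableEq α] {a : α} (hr : ∀ x, ¬ r x x)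
    (hmax : ∀ b, #(reachableSet r b) ≤ #(reachableSet r a)) :
    ({u | r u a} : Finset α) ⊆ (reachableSet r a).erase a := by
  intro u hu
  have hua : r u a := (mem_filter.1 hu).2
  refine mem_erase.2 ⟨fun h ↦ hr u (h ▸ hua), ?_⟩
  by_contra hu
  exact (hmax u).not_gt (card_lt_card (reachableSet_ssubset_of_notMem hua hu))

theorem exists_forall_reflTransGen_of_le_card_filter [Nonempty α] (hr : ∀ x, ¬ r x x) {d : ℕ}
    (hd : ∀ a, d ≤ #({u | r u a} : Finset α)) (hcard : Fintype.card α ≤ 2 * d + 1) :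
    ∃ a, ∀ b, ReflTransGen r a b := by
  classical
  obtain ⟨a, -, hmax⟩ := exists_max_image univ (fun a ↦ #(reachableSet r a)) univ_nonempty
  refine ⟨a, fun w ↦ by_contra fun hw ↦ ?_⟩
  have hwR : w ∉ reachableSet r a := fun h ↦ hw (mem_reachableSet.1 h)
  have haR : a ∈ reachableSet r a := mem_reachableSet.2 .refl
  have hw_in : d ≤ Fintype.card α - #(reachableSet r a) - 1 := by
    calc d ≤ #({u | r u w} : Finset α) := hd w
      _ ≤ #((reachableSet r a)ᶜ.erase w) :=
        card_le_card (filter_rel_subset_compl_erase hr hwR)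
      _ = _ := by rw [card_erase_of_mem (mem_compl.2 hwR), card_compl]
  have ha_in : d ≤ #(reachableSet r a) - 1 := by
    calc d ≤ #({u | r u a} : Finset α) := hd a
      _ ≤ #((reachableSet r a).erase a) :=
        card_le_card (filter_rel_subset_erase_of_card_le hr fun b ↦ hmax b (mem_univ b))
      _ = _ := card_erase_of_mem haR
  have hR_pos : 0 < #(reachableSet r a) := card_pos.2 ⟨a, haR⟩
  have hR_lt : #(reachableSet r a) < Fintype.card α := card_lt_univ_of_notMem hwR
  omega

/-- Generalized source component lemma: a loopless directed graph on `N ≥ 2n+1`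
vertices in which every vertex has in-degree at least `N - 1 - n` has a vertex
with a directed path to every other vertex. -/
theorem reduced_graph_has_source_component_general (n N : ℕ) (hN : 2 * n + 1 ≤ N)
    (A : Fin N → Fin N → Prop) [DecidableRel A]
    (hirr : ∀ v, ¬ A v v)
    (hindeg : ∀ v : Fin N, N - 1 - n ≤ (Finset.univ.filter (fun u => A u v)).card) :
    ∃ v₀ : Fin N, ∀ w : Fin N, w ≠ v₀ → Relation.ReflTransGen A v₀ w := by
  have : Nonempty (Fin N) := ⟨⟨0, by omega⟩⟩
  obtain ⟨v₀, hv₀⟩ := exists_forall_reflTransGen_of_le_card_filter hirr hindeg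
    (by rw [Fintype.card_fin]; omega)
  exact ⟨v₀, fun w _ ↦ hv₀ w⟩
end

section
/- Let n be a natural number and let G be a directed graph without self-loops on a vertex set of size 2n+1 in which every vertex has in-degree at least n. Let v₀ be a vertex whose set S of out-neighbors satisfies |S| ≥ n. Then every vertex w with w ≠ v₀ and w ∉ S has an in-neighbor in S ∪ {v₀}; consequently, v₀ reaches every other vertex of G by a directed path of length at most 2. -/
/-!
The in-neighbourhood of `w` and the set `S ∪ {v₀}` both avoid `w` (no loops, and `w ∉ S ∪ {v₀}`),
so both lie in a set of `2n` vertices, while their sizes add up to at least `n + (n + 1)`.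
Hence they meet: some vertex of `S ∪ {v₀}` has an edge into `w`.
-/

open Finset

theorem exists_mem_rel_of_card_le {V : Type*} [Fintype V] [DecidableEq V]
    (A : V → V → Prop) [DecidableRel A] {w : V} (hw : ¬ A w w) {T : Finset V} (hwT : w ∉ T)
    (hcard : Fintype.card V ≤ #(univ.filter (A · w)) + #T) :
    ∃ u ∈ T, A u w := by
  have hin : univ.filter (A · w) ⊆ univ.erase w := fun u hu ↦ by
    rw [mem_erase]
    exact ⟨fun huw ↦ hw (huw ▸ (mem_filter.1 hu).2), mem_univ u⟩
  have hT : T ⊆ univ.erase w := fun u hu ↦ mem_erase.2 ⟨fun huw ↦ hwT (huw ▸ hu), mem_univ u⟩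
  have hlt : #(univ.erase w) < #(univ.filter (A · w)) + #T :=
    (card_erase_lt_of_mem (mem_univ w)).trans_le (card_univ (α := V) ▸ hcard)
  obtain ⟨u, hu⟩ := inter_nonempty_of_card_lt_card_add_card hin hT hlt
  rw [mem_inter, mem_filter] at hu
  exact ⟨u, hu.2, hu.1.2⟩

/-- In a loopless directed graph on `2n+1` vertices with all in-degrees at least
`n`, if `v₀` has at least `n` out-neighbors (forming the set `S`), then every
vertex other than `v₀` and outside `S` has an in-neighbor in `S ∪ {v₀}`;
consequently `v₀` reaches every other vertex by a directed path of length at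
most 2. -/
theorem source_reaches_in_two_steps (n : ℕ)
    (A : Fin (2 * n + 1) → Fin (2 * n + 1) → Prop) [DecidableRel A]
    (hirr : ∀ v, ¬ A v v)
    (hindeg : ∀ v : Fin (2 * n + 1), n ≤ (Finset.univ.filter (fun u => A u v)).card)
    (v₀ : Fin (2 * n + 1))
    (hS : n ≤ (Finset.univ.filter (fun w => A v₀ w)).card) :
    (∀ w : Fin (2 * n + 1), w ≠ v₀ → w ∉ Finset.univ.filter (fun w => A v₀ w) →
      ∃ u ∈ (Finset.univ.filter (fun w => A v₀ w)) ∪ {v₀}, A u w) ∧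
    (∀ w : Fin (2 * n + 1), w ≠ v₀ → A v₀ w ∨ ∃ u, A v₀ u ∧ A u w) := by
  set S := univ.filter (fun w => A v₀ w)
  have hv₀S : v₀ ∉ S := by simp [S, hirr v₀]
  have hcard : #(S ∪ {v₀}) = #S + 1 := card_union_of_disjoint (disjoint_singleton_right.2 hv₀S)
  have has_inNeighbor : ∀ w, w ≠ v₀ → w ∉ S → ∃ u ∈ S ∪ {v₀}, A u w := fun w hwv hwS ↦
    exists_mem_rel_of_card_le A (hirr w) (by simp [hwv, hwS])
      (by rw [hcard, Fintype.card_fin]; linarith [hindeg w])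
  refine ⟨has_inNeighbor, fun w hwv ↦ ?_⟩
  by_cases hwS : w ∈ S
  · exact .inl (mem_filter.1 hwS).2
  obtain ⟨u, hu, huw⟩ := has_inNeighbor w hwv hwS
  rcases mem_union.1 hu with huS | huv
  · exact .inr ⟨u, (mem_filter.1 huS).2, huw⟩
  · exact .inl (mem_singleton.1 huv ▸ huw)
end

section
/- Let b be a natural number and set h = 2b+1. Let A and B be h×h real matrices with nonnegative entries such that every row of A has at least b+1 strictly positive entries and some column j of B has at least b+1 strictly positive entries. Then every entry of column j of the product A·B is strictly positive; in particular A·B is a scrambling matrix. -/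
/-! Pigeonhole: `b + 1` positive entries in row `i` of `A` and `b + 1` in column `j` of `B`,
among only `2b + 1` indices, share an index `k`; then `A i k * B k j` is a positive term of
the nonnegative sum `(A * B) i j`. -/

namespace Matrix

variable {l m n R : Type*} [Fintype m] [Semiring R] [PartialOrder R] [IsStrictOrderedRing R]

theorem mul_apply_pos_of_pos_of_pos {A : Matrix l m R} {B : Matrix m n R} {i : l} {j : n}
    (hA : ∀ k, 0 ≤ A i k) (hB : ∀ k, 0 ≤ B k j) {k : m} (hik : 0 < A i k) (hkj : 0 < B k j) :
    0 < (A * B) i j :=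
  Finset.sum_pos' (fun k _ => mul_nonneg (hA k) (hB k)) ⟨k, Finset.mem_univ k, mul_pos hik hkj⟩

theorem mul_apply_pos_of_card_lt_card_add_card [DecidableEq m] {A : Matrix l m R}
    {B : Matrix m n R} {i : l} {j : n} (hA : ∀ k, 0 ≤ A i k) (hB : ∀ k, 0 ≤ B k j)
    {s t : Finset m} (hs : ∀ k ∈ s, 0 < A i k) (ht : ∀ k ∈ t, 0 < B k j)
    (hst : Fintype.card m < s.card + t.card) :
    0 < (A * B) i j := by
  obtain ⟨k, hk⟩ := Finset.inter_nonempty_of_card_lt_card_add_card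
    (Finset.subset_univ s) (Finset.subset_univ t) hst
  rw [Finset.mem_inter] at hk
  exact mul_apply_pos_of_pos_of_pos hA hB (hs k hk.1) (ht k hk.2)

end Matrix

open Classical in
/-- If every row of the nonnegative `(2b+1)×(2b+1)` matrix `A` has at least `b+1`
positive entries and column `j` of the nonnegative matrix `B` has at least `b+1`
positive entries, then every entry of column `j` of `A * B` is positive; in
particular `A * B` is a scrambling matrix. -/
theorem mul_scrambling_of_rows_and_column (b : ℕ)
    (A B : Matrix (Fin (2 * b + 1)) (Fin (2 * b + 1)) ℝ)
    (hA : ∀ i j, 0 ≤ A i j) (hB : ∀ i j, 0 ≤ B i j)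
    (hArow : ∀ i, b + 1 ≤ (Finset.univ.filter (fun j => 0 < A i j)).card)
    (j : Fin (2 * b + 1))
    (hBcol : b + 1 ≤ (Finset.univ.filter (fun i => 0 < B i j)).card) :
    (∀ i, 0 < (A * B) i j) ∧ ∃ c, ∀ i, 0 < (A * B) i c := by
  have hcol : ∀ i, 0 < (A * B) i j := fun i =>
    Matrix.mul_apply_pos_of_card_lt_card_add_card (hA i) (hB · j)
      (s := Finset.univ.filter (fun k => 0 < A i k))
      (t := Finset.univ.filter (fun k => 0 < B k j))
      (fun _ hk => (Finset.mem_filter.mp hk).2) (fun _ hk => (Finset.mem_filter.mp hk).2)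
      (by have := hArow i; rw [Fintype.card_fin]; omega)
  exact ⟨hcol, j, hcol⟩
end

section
/- Let h ≥ 1, let β ∈ (0,1], and let M : ℕ → (h×h real matrices) be a sequence of row-stochastic matrices (all entries nonnegative, each row summing to 1) such that for every k, the product M(3k+2)·M(3k+1)·M(3k) has some column all of whose entries are at least β. Define x : ℕ → ℝ^h by an arbitrary initial vector x(0) and x(t+1) = M(t)·x(t). Then for every t, max_i x(t) i − min_i x(t) i ≤ (1 − β)^{⌊t/3⌋} · (max_i x(0) i − min_i x(0) i); in particular the diameter max_i x(t) i − min_i x(t) i tends to 0 as t → ∞, so all coordinates converge to a common limit. -/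
/-!
For a row-stochastic `A`, `max v - (A v)ᵢ = ∑ₖ Aᵢₖ (max v - vₖ) ≥ Aᵢⱼ (max v - vⱼ)`, and
symmetrically for the minimum; when column `j` is bounded below by `β`, adding the two bounds
shows that the spread `max - min` contracts by the factor `1 - β`. A stochastic step never
increases the maximum nor decreases the minimum, so along the trajectory the spread is antitone
and contracts by `1 - β` every three steps, and each coordinate is squeezed between the antitone
maximum and the monotone minimum, whose gap tends to `0`.
-/

open Filter Topology Matrix

noncomputable def spread {n : Type*} (v : n → ℝ) : ℝ := (⨆ i, v i) - ⨅ i, v i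

lemma le_pow_div_mul_of_antitone {d : ℕ → ℝ} (hd : Antitone d) {p : ℕ} {r : ℝ} (hr : 0 ≤ r)
    (hstep : ∀ k, d (p * k + p) ≤ r * d (p * k)) (t : ℕ) : d t ≤ r ^ (t / p) * d 0 := by
  have hmul : ∀ k, d (p * k) ≤ r ^ k * d 0 := by
    intro k
    induction k with
    | zero => simp
    | succ k ih =>
      calc d (p * (k + 1)) ≤ r * d (p * k) := by simpa [mul_add] using hstep k
        _ ≤ r * (r ^ k * d 0) := mul_le_mul_of_nonneg_left ih hr
        _ = r ^ (k + 1) * d 0 := by ring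
  exact (hd (Nat.mul_div_le t p)).trans (hmul (t / p))

variable {n : Type*} [Fintype n]

lemma spread_nonneg [Nonempty n] (v : n → ℝ) : 0 ≤ spread v :=
  sub_nonneg.2 ((ciInf_le (Finite.bddBelow_range v) (Classical.arbitrary n)).trans
    (le_ciSup (Finite.bddAbove_range v) _))

lemma exists_tendsto_of_tendsto_spread_zero [Nonempty n] {x : ℕ → n → ℝ}
    (hS : Antitone fun t => ⨆ i, x t i) (hI : Monotone fun t => ⨅ i, x t i)
    (hd : Tendsto (fun t => spread (x t)) atTop (𝓝 0)) :
    ∃ c, ∀ i, Tendsto (fun t => x t i) atTop (𝓝 c) := by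
  have hbdd : BddBelow (Set.range fun t => ⨆ i, x t i) :=
    ⟨⨅ i, x 0 i, by
      rintro _ ⟨t, rfl⟩
      exact (hI (Nat.zero_le t)).trans (sub_nonneg.1 (spread_nonneg (x t)))⟩
  have hSc := tendsto_atTop_ciInf hS hbdd
  refine ⟨_, fun i => tendsto_of_tendsto_of_tendsto_of_le_of_le (by simpa using hSc.sub hd) hSc
    (fun t => ?_) (fun t => le_ciSup (Finite.bddAbove_range (x t)) i)⟩
  simpa [spread] using ciInf_le (Finite.bddBelow_range (x t)) i

variable [DecidableEq n]

namespace Matrix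

lemma mulVec_apply_le_sub_of_mem_rowStochastic {A : Matrix n n ℝ} (hA : A ∈ rowStochastic ℝ n)
    {v : n → ℝ} {c : ℝ} (hv : ∀ k, v k ≤ c) (i j : n) :
    (A *ᵥ v) i ≤ c - A i j * (c - v j) := by
  have hsum : c - (A *ᵥ v) i = ∑ k, A i k * (c - v k) := by
    simp only [mulVec, dotProduct, mul_sub, Finset.sum_sub_distrib, ← Finset.sum_mul,
      sum_row_of_mem_rowStochastic hA i, one_mul]
  have hj : A i j * (c - v j) ≤ ∑ k, A i k * (c - v k) :=
    Finset.single_le_sum (fun k _ => mul_nonneg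
      (nonneg_of_mem_rowStochastic hA (i := i) (j := k)) (sub_nonneg.2 (hv k))) (Finset.mem_univ j)
  linarith

lemma add_le_mulVec_apply_of_mem_rowStochastic {A : Matrix n n ℝ} (hA : A ∈ rowStochastic ℝ n)
    {v : n → ℝ} {c : ℝ} (hv : ∀ k, c ≤ v k) (i j : n) :
    c + A i j * (v j - c) ≤ (A *ᵥ v) i := by
  have := mulVec_apply_le_sub_of_mem_rowStochastic hA (v := -v) (c := -c)
    (fun k => neg_le_neg (hv k)) i j
  simp only [mulVec_neg, Pi.neg_apply] at this
  linarith

variable [Nonempty n]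

lemma ciSup_mulVec_le_of_mem_rowStochastic {A : Matrix n n ℝ} (hA : A ∈ rowStochastic ℝ n)
    (v : n → ℝ) : ⨆ i, (A *ᵥ v) i ≤ ⨆ i, v i :=
  ciSup_le fun i => (mulVec_apply_le_sub_of_mem_rowStochastic hA
    (fun k => le_ciSup (Finite.bddAbove_range v) k) i i).trans
    (sub_le_self _ (mul_nonneg (nonneg_of_mem_rowStochastic hA)
      (sub_nonneg.2 (le_ciSup (Finite.bddAbove_range v) i))))

lemma ciInf_le_mulVec_of_mem_rowStochastic {A : Matrix n n ℝ} (hA : A ∈ rowStochastic ℝ n)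
    (v : n → ℝ) : ⨅ i, v i ≤ ⨅ i, (A *ᵥ v) i :=
  le_ciInf fun i => (le_add_of_nonneg_right (mul_nonneg (nonneg_of_mem_rowStochastic hA)
    (sub_nonneg.2 (ciInf_le (Finite.bddBelow_range v) i)))).trans
    (add_le_mulVec_apply_of_mem_rowStochastic hA
      (fun k => ciInf_le (Finite.bddBelow_range v) k) i i)

lemma spread_mulVec_le_of_le_col {A : Matrix n n ℝ} (hA : A ∈ rowStochastic ℝ n) {β : ℝ}
    {j : n} (hj : ∀ i, β ≤ A i j) (v : n → ℝ) :
    spread (A *ᵥ v) ≤ (1 - β) * spread v := by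
  set S := ⨆ i, v i
  set I := ⨅ i, v i
  have hvS : ∀ k, v k ≤ S := le_ciSup (Finite.bddAbove_range v)
  have hvI : ∀ k, I ≤ v k := ciInf_le (Finite.bddBelow_range v)
  have hsup : ⨆ i, (A *ᵥ v) i ≤ S - β * (S - v j) := ciSup_le fun i =>
    (mulVec_apply_le_sub_of_mem_rowStochastic hA hvS i j).trans
      (sub_le_sub_left (mul_le_mul_of_nonneg_right (hj i) (sub_nonneg.2 (hvS j))) S)
  have hinf : I + β * (v j - I) ≤ ⨅ i, (A *ᵥ v) i := le_ciInf fun i =>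
    (add_le_add_right (mul_le_mul_of_nonneg_right (hj i) (sub_nonneg.2 (hvI j))) I).trans
      (add_le_mulVec_apply_of_mem_rowStochastic hA hvI i j)
  simp only [spread]
  linarith

end Matrix

section Trajectory

variable [Nonempty n] {M : ℕ → Matrix n n ℝ} {x : ℕ → n → ℝ}

lemma antitone_ciSup_of_mulVec_rowStochastic (hM : ∀ t, M t ∈ rowStochastic ℝ n)
    (hx : ∀ t, x (t + 1) = M t *ᵥ x t) : Antitone fun t => ⨆ i, x t i :=
  antitone_nat_of_succ_le fun t => hx t ▸ ciSup_mulVec_le_of_mem_rowStochastic (hM t) (x t)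

lemma monotone_ciInf_of_mulVec_rowStochastic (hM : ∀ t, M t ∈ rowStochastic ℝ n)
    (hx : ∀ t, x (t + 1) = M t *ᵥ x t) : Monotone fun t => ⨅ i, x t i :=
  monotone_nat_of_le_succ fun t => hx t ▸ ciInf_le_mulVec_of_mem_rowStochastic (hM t) (x t)

lemma antitone_spread_of_mulVec_rowStochastic (hM : ∀ t, M t ∈ rowStochastic ℝ n)
    (hx : ∀ t, x (t + 1) = M t *ᵥ x t) : Antitone fun t => spread (x t) := fun _ _ hst =>
  sub_le_sub (antitone_ciSup_of_mulVec_rowStochastic hM hx hst)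
    (monotone_ciInf_of_mulVec_rowStochastic hM hx hst)

end Trajectory

/-- Geometric convergence under scrambling products: if each product of three
consecutive row-stochastic transition matrices has a column bounded below by
`β ∈ (0,1]`, then the diameter of the state vector decays like `(1-β)^⌊t/3⌋`,
hence tends to `0`, and all coordinates converge to a common limit. -/
theorem convergence_of_scrambling_products (h : ℕ) (hh : 1 ≤ h)
    (β : ℝ) (hβ0 : 0 < β) (hβ1 : β ≤ 1)
    (M : ℕ → Matrix (Fin h) (Fin h) ℝ)
    (hnonneg : ∀ t i j, 0 ≤ M t i j) (hrow : ∀ t i, ∑ j, M t i j = 1)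
    (hscram : ∀ k : ℕ, ∃ j, ∀ i, β ≤ (M (3 * k + 2) * M (3 * k + 1) * M (3 * k)) i j)
    (x : ℕ → Fin h → ℝ) (hx : ∀ t, x (t + 1) = (M t).mulVec (x t)) :
    (∀ t, (⨆ i, x t i) - (⨅ i, x t i) ≤
        (1 - β) ^ (t / 3) * ((⨆ i, x 0 i) - ⨅ i, x 0 i)) ∧
    Filter.Tendsto (fun t => (⨆ i, x t i) - ⨅ i, x t i) Filter.atTop (nhds 0) ∧
    ∃ c : ℝ, ∀ i, Filter.Tendsto (fun t => x t i) Filter.atTop (nhds c) := by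
  have : Nonempty (Fin h) := ⟨⟨0, hh⟩⟩
  have hM : ∀ t, M t ∈ rowStochastic ℝ (Fin h) := fun t =>
    mem_rowStochastic_iff_sum.2 ⟨hnonneg t, hrow t⟩
  have hcontract : ∀ k, spread (x (3 * k + 3)) ≤ (1 - β) * spread (x (3 * k)) := fun k => by
    obtain ⟨j, hj⟩ := hscram k
    have hx3 : x (3 * k + 3) = (M (3 * k + 2) * M (3 * k + 1) * M (3 * k)) *ᵥ x (3 * k) := by
      simp only [hx, mulVec_mulVec, mul_assoc]
    rw [hx3]
    exact spread_mulVec_le_of_le_col (mul_mem (mul_mem (hM _) (hM _)) (hM _)) hj _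
  have hbound : ∀ t, spread (x t) ≤ (1 - β) ^ (t / 3) * spread (x 0) :=
    le_pow_div_mul_of_antitone (antitone_spread_of_mulVec_rowStochastic hM hx)
      (sub_nonneg.2 hβ1) hcontract
  have hpow : Tendsto (fun t => (1 - β) ^ (t / 3) * spread (x 0)) atTop (𝓝 0) := by
    simpa using ((tendsto_pow_atTop_nhds_zero_of_lt_one (sub_nonneg.2 hβ1) (by linarith)).comp
      (Nat.tendsto_div_const_atTop three_ne_zero)).mul_const (spread (x 0))
  have hspread : Tendsto (fun t => spread (x t)) atTop (𝓝 0) :=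
    squeeze_zero (fun t => spread_nonneg (x t)) hbound hpow
  exact ⟨hbound, hspread, exists_tendsto_of_tendsto_spread_zero
    (antitone_ciSup_of_mulVec_rowStochastic hM hx)
    (monotone_ciInf_of_mulVec_rowStochastic hM hx) hspread⟩
end
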